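/- arXiv:1704.00484 — 2 statements merged into one kernel-verified Lean document; each statement's English description precedes it below -/
import Mathlib

section
/- Let u ∈ ℂ((z)) be a nonzero formal Laurent series and f(z) = z + a₂z² + a₃z³ + ⋯ a formal diffeomorphism tangent to the identity with f ≠ id. If u ∘ f = μ·u for some μ ∈ ℂ*, then μ = 1 and u is a constant, i.e., u ∈ ℂ*. -/
/-!
Write `f = z·g` with `g ≡ 1 + a z^d (mod z^(d+1))`, `a ≠ 0`, `d ≥ 1`, and `u = z^n·v` with
`v(0) ≠ 0`. Writing `n = n⁺ - n⁻` and multiplying by `g^(n⁻)`, the equation `u ∘ f = μ u` becomes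
the power-series identity `g^(n⁺)·(v ∘ f) = μ·g^(n⁻)·v`. Since `(z^d)^2 ≡ 0`, we have
`g^k ≡ 1 + k a z^d (mod z^(d+1))`; comparing constant terms gives `μ = 1`, and comparing
`z^d`-coefficients gives `n a v(0) = 0`, so `n = 0`. Finally, if `v ∘ f = v` and `v_j = 0` for
`0 < j < k`, then the `z^(k+d)`-coefficient of `v ∘ f` is `v_(k+d) + k a v_k`, which forces
`v_k = 0`; hence `v` is constant.
-/

open PowerSeries

/-- Composition of formal power series `f ∘ g` (intended for `g` with zero
constant term). -/
noncomputable def PowerSeries.comp (f g : PowerSeries ℂ) : PowerSeries ℂ :=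
  PowerSeries.mk fun n =>
    ∑ k ∈ Finset.range (n + 1), PowerSeries.coeff k f * PowerSeries.coeff n (g ^ k)

/-- Composition `u ∘ f` of a formal Laurent series `u` with a formal power
series `f` (intended for `f` of order one): writing `u = z^(ord u) · v` with
`v` a power series, `u ∘ f = f^(ord u) · (v ∘ f)`. -/
noncomputable def LaurentSeries.comp (u : LaurentSeries ℂ) (f : PowerSeries ℂ) :
    LaurentSeries ℂ :=
  (HahnSeries.ofPowerSeries ℤ ℂ f) ^ (u.order) *
    (HahnSeries.ofPowerSeries ℤ ℂ (PowerSeries.comp u.powerSeriesPart f))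

theorem one_add_pow_of_sq_eq_zero {R : Type*} [CommRing R] {ε : R} (h : ε ^ 2 = 0) (k : ℕ) :
    (1 + ε) ^ k = 1 + k * ε := by
  induction k with
  | zero => simp
  | succ k ih => rw [pow_succ, ih]; push_cast; linear_combination (k : R) * h

namespace PowerSeries

variable {R : Type*} [CommRing R]

theorem coeff_eq_of_mk_eq {n : ℕ} {p q : R⟦X⟧}
    (h : Ideal.Quotient.mk (Ideal.span {X ^ n}) p = Ideal.Quotient.mk _ q) {j : ℕ} (hj : j < n) :
    coeff j p = coeff j q := by
  rw [Ideal.Quotient.eq, Ideal.mem_span_singleton, X_pow_dvd_iff] at h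
  simpa [sub_eq_zero] using h j hj

theorem mk_pow_eq_one_add {d : ℕ} (hd : 0 < d) {g : R⟦X⟧} {a : R}
    (hg : Ideal.Quotient.mk (Ideal.span {X ^ (d + 1)}) g = Ideal.Quotient.mk _ (1 + C a * X ^ d))
    (k : ℕ) :
    Ideal.Quotient.mk (Ideal.span {X ^ (d + 1)}) (g ^ k) =
      Ideal.Quotient.mk _ (1 + C (k * a) * X ^ d) := by
  have hsq : Ideal.Quotient.mk (Ideal.span {X ^ (d + 1)}) (C a * X ^ d) ^ 2 = 0 := by
    rw [← map_pow, Ideal.Quotient.eq_zero_iff_mem, Ideal.mem_span_singleton]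
    obtain ⟨e, rfl⟩ := Nat.exists_eq_add_one_of_ne_zero hd.ne'
    exact ⟨C (a ^ 2) * X ^ e, by rw [map_pow]; ring⟩
  rw [map_pow, hg, map_add, map_one, one_add_pow_of_sq_eq_zero hsq]
  simp only [map_add, map_one, map_mul, map_natCast, mul_assoc]

theorem coeff_one_add_C_mul_X_pow {d j : ℕ} (hd : 0 < d) (c : R) :
    coeff j (1 + C c * X ^ d) = if j = 0 then 1 else if j = d then c else 0 := by
  split_ifs <;> simp_all [coeff_one, hd.ne']

theorem coeff_pow_of_mk_eq {d : ℕ} (hd : 0 < d) {g : R⟦X⟧} {a : R}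
    (hg : Ideal.Quotient.mk (Ideal.span {X ^ (d + 1)}) g = Ideal.Quotient.mk _ (1 + C a * X ^ d))
    (k : ℕ) {j : ℕ} (hj : j ≤ d) :
    coeff j (g ^ k) = if j = 0 then 1 else if j = d then k * a else 0 := by
  rw [coeff_eq_of_mk_eq (mk_pow_eq_one_add hd hg k) (Nat.lt_succ_of_le hj),
    coeff_one_add_C_mul_X_pow hd]

theorem coeff_pow_mul_of_mk_eq {d : ℕ} (hd : 0 < d) {g : R⟦X⟧} {a : R}
    (hg : Ideal.Quotient.mk (Ideal.span {X ^ (d + 1)}) g = Ideal.Quotient.mk _ (1 + C a * X ^ d))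
    (k : ℕ) (w : R⟦X⟧) {j : ℕ} (hj : j ≤ d) :
    coeff j (g ^ k * w) = coeff j w + if j = d then k * a * coeff 0 w else 0 := by
  have hmk : Ideal.Quotient.mk (Ideal.span {X ^ (d + 1)}) (g ^ k * w) =
      Ideal.Quotient.mk _ ((1 + C (k * a) * X ^ d) * w) := by
    rw [map_mul, mk_pow_eq_one_add hd hg k, ← map_mul]
  rw [coeff_eq_of_mk_eq hmk (Nat.lt_succ_of_le hj), add_mul, one_mul, map_add, mul_assoc,
    coeff_C_mul, coeff_X_pow_mul']
  rcases hj.lt_or_eq with hlt | rfl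
  · rw [if_neg (not_le.mpr hlt), if_neg hlt.ne, mul_zero]
  · rw [if_pos le_rfl, if_pos rfl, Nat.sub_self]

theorem exists_mk_eq_one_add_C_mul_X_pow {g : R⟦X⟧} (hg0 : constantCoeff g = 1) (hg1 : g ≠ 1) :
    ∃ d, 0 < d ∧ ∃ a ≠ 0, Ideal.Quotient.mk (Ideal.span {X ^ (d + 1)}) g =
      Ideal.Quotient.mk _ (1 + C a * X ^ d) := by
  have hne : g - 1 ≠ 0 := sub_ne_zero.mpr hg1
  have hpos : 0 < (g - 1).order.toNat := by
    have h0 : (g - 1).order ≠ 0 := order_ne_zero_iff_constCoeff_eq_zero.mpr (by simp [hg0])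
    have htop : (g - 1).order ≠ ⊤ := order_eq_top.not.mpr hne
    exact ENat.toNat_pos h0 htop
  refine ⟨_, hpos, _, coeff_order hne, ?_⟩
  rw [Ideal.Quotient.eq, Ideal.mem_span_singleton, X_pow_dvd_iff]
  intro m hm
  rw [← sub_sub, map_sub, coeff_C_mul_X_pow]
  rcases (Nat.lt_succ_iff.mp hm).lt_or_eq with hm | rfl
  · rw [coeff_of_lt_order_toNat m hm, if_neg hm.ne, sub_zero]
  · rw [if_pos rfl, sub_self]

theorem coeff_zero_comp (v f : ℂ⟦X⟧) : coeff 0 (v.comp f) = coeff 0 v := by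
  simp [PowerSeries.comp]

theorem coeff_add_comp_X_mul {d : ℕ} (hd : 0 < d) {g : ℂ⟦X⟧} {a : ℂ}
    (hg : Ideal.Quotient.mk (Ideal.span {X ^ (d + 1)}) g = Ideal.Quotient.mk _ (1 + C a * X ^ d))
    {k : ℕ} {v : ℂ⟦X⟧} (hv : ∀ j, 0 < j → j < k → coeff j v = 0) :
    coeff (k + d) (v.comp (X * g)) = coeff (k + d) v + k * a * coeff k v := by
  have hterm (t : ℕ) (ht : t ≤ k + d) :
      coeff (k + d) ((X * g) ^ t) = coeff (k + d - t) (g ^ t) := by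
    rw [mul_pow, coeff_X_pow_mul', if_pos ht]
  -- Only the terms `t = k` and `t = k + d` of the composition sum survive.
  rw [PowerSeries.comp, coeff_mk,
    Finset.sum_eq_add_of_mem k (k + d) (by simp) (by simp) (by omega)]
  · rw [hterm k (by omega), hterm _ le_rfl, Nat.add_sub_cancel_left, Nat.sub_self,
      coeff_pow_of_mk_eq hd hg k le_rfl, coeff_pow_of_mk_eq hd hg _ (Nat.zero_le _)]
    simp [hd.ne']
    ring
  · rintro t ht ⟨htk, htkd⟩
    rw [Finset.mem_range] at ht
    rw [hterm t (by omega)]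
    rcases lt_or_gt_of_ne htk with hlt | hgt
    · rcases Nat.eq_zero_or_pos t with rfl | htpos
      · simp [coeff_one]
        omega
      · rw [hv t htpos hlt, zero_mul]
    · rw [coeff_pow_of_mk_eq hd hg t (by omega), if_neg (by omega), if_neg (by omega), mul_zero]

theorem eq_C_of_comp_X_mul_eq_self {d : ℕ} (hd : 0 < d) {g : ℂ⟦X⟧} {a : ℂ} (ha : a ≠ 0)
    (hg : Ideal.Quotient.mk (Ideal.span {X ^ (d + 1)}) g = Ideal.Quotient.mk _ (1 + C a * X ^ d))
    {v : ℂ⟦X⟧} (hv : v.comp (X * g) = v) :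
    v = C (coeff 0 v) := by
  have hvanish (k : ℕ) : 0 < k → coeff k v = 0 := by
    induction k using Nat.strong_induction_on with
    | _ k ih =>
      intro hk
      have := coeff_add_comp_X_mul hd hg (fun j hj hjk => ih j hjk hj)
      rw [hv, left_eq_add, mul_eq_zero, mul_eq_zero] at this
      simpa [hk.ne', ha] using this
  ext k
  rcases Nat.eq_zero_or_pos k with rfl | hk
  · simp
  · simp [coeff_C, hvanish k hk, hk.ne']

theorem eq_one_and_eq_of_pow_mul_comp_eq_smul {d : ℕ} (hd : 0 < d) {g : ℂ⟦X⟧} {a : ℂ}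
    (ha : a ≠ 0)
    (hg : Ideal.Quotient.mk (Ideal.span {X ^ (d + 1)}) g = Ideal.Quotient.mk _ (1 + C a * X ^ d))
    {v : ℂ⟦X⟧} (hv0 : coeff 0 v ≠ 0) {m n : ℕ} {μ : ℂ}
    (h : g ^ m * v.comp (X * g) = μ • (g ^ n * v)) :
    μ = 1 ∧ m = n := by
  have h0 := congrArg (coeff 0) h
  have hd' := congrArg (coeff d) h
  rw [coeff_pow_mul_of_mk_eq hd hg _ _ (Nat.zero_le d), coeff_smul,
    coeff_pow_mul_of_mk_eq hd hg _ _ (Nat.zero_le d), coeff_zero_comp] at h0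
  simp only [hd.ne, if_false, add_zero, smul_eq_mul] at h0
  have hμ : μ = 1 := (mul_left_eq_self₀.mp h0.symm).resolve_right hv0
  have hcomp := coeff_add_comp_X_mul (k := 0) (v := v) hd hg (by omega)
  rw [zero_add, Nat.cast_zero, zero_mul, zero_mul, add_zero] at hcomp
  rw [coeff_pow_mul_of_mk_eq hd hg _ _ le_rfl, coeff_smul, coeff_pow_mul_of_mk_eq hd hg _ _ le_rfl,
    coeff_zero_comp, hcomp, hμ, if_pos rfl, if_pos rfl, one_smul] at hd'
  have hmn : ((m : ℂ) - n) * a * coeff 0 v = 0 := by linear_combination hd'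
  rw [mul_assoc, mul_eq_zero, sub_eq_zero, Nat.cast_inj] at hmn
  exact ⟨hμ, hmn.resolve_right (mul_ne_zero ha hv0)⟩

end PowerSeries

theorem LaurentSeries.pow_mul_comp_powerSeriesPart_eq_smul {u : LaurentSeries ℂ} {g : ℂ⟦X⟧}
    (hg : g ≠ 0) {μ : ℂ} (h : u.comp (X * g) = μ • u) :
    g ^ u.order.toNat * u.powerSeriesPart.comp (X * g) =
      μ • (g ^ (-u.order).toNat * u.powerSeriesPart) := by
  let ι := HahnSeries.ofPowerSeries ℤ ℂ
  have hι : Function.Injective ι := HahnSeries.ofPowerSeries_injective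
  have hcancel :
      ι g ^ u.order * ι (u.powerSeriesPart.comp (X * g)) = ι (C μ * u.powerSeriesPart) := by
    refine mul_left_cancel₀ (HahnSeries.single_ne_zero (one_ne_zero (α := ℂ)) (a := u.order)) ?_
    rw [map_mul, HahnSeries.ofPowerSeries_C, mul_left_comm _ (HahnSeries.C μ),
      u.single_order_mul_powerSeriesPart, HahnSeries.C_mul_eq_smul, ← h, LaurentSeries.comp,
      map_mul, HahnSeries.ofPowerSeries_X, mul_zpow, ← RatFunc.single_zpow, mul_assoc]
  have hpow : ι g ^ u.order.toNat = ι g ^ (-u.order).toNat * ι g ^ u.order := by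
    rw [← zpow_natCast, ← zpow_natCast, ← zpow_add₀ ((map_ne_zero_iff _ hι).mpr hg)]
    congr 1; omega
  apply hι
  rw [smul_eq_C_mul, mul_left_comm, map_mul, map_mul ι (g ^ _), map_pow, map_pow, hpow, mul_assoc,
    hcancel]

theorem laurent_eigen_constant_general
    (u : LaurentSeries ℂ) (hu : u ≠ 0)
    (f : PowerSeries ℂ) (hf0 : constantCoeff f = 0) (hf1 : coeff 1 f = 1)
    (hfne : f ≠ PowerSeries.X)
    (μ : ℂ) (h : u.comp f = μ • u) :
    μ = 1 ∧ ∃ c : ℂ, c ≠ 0 ∧ u = HahnSeries.single (0 : ℤ) c := by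
  obtain ⟨g, rfl⟩ := X_dvd_iff.mpr hf0
  have hg0 : constantCoeff g = 1 := by simpa [coeff_succ_X_mul] using hf1
  obtain ⟨d, hd, a, ha, hg⟩ := exists_mk_eq_one_add_C_mul_X_pow hg0 (by rintro rfl; simp at hfne)
  have hv0 : coeff 0 u.powerSeriesPart ≠ 0 := by
    simpa [LaurentSeries.powerSeriesPart_coeff] using mt HahnSeries.coeff_order_eq_zero.mp hu
  have key := LaurentSeries.pow_mul_comp_powerSeriesPart_eq_smul (by rintro rfl; simp at hg0) h
  obtain ⟨hμ, hmn⟩ := eq_one_and_eq_of_pow_mul_comp_eq_smul hd ha hg hv0 key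
  have horder : u.order = 0 := by omega
  have hv : u.powerSeriesPart.comp (X * g) = u.powerSeriesPart := by
    simpa [horder, hμ] using key
  refine ⟨hμ, _, hv0, ?_⟩
  conv_lhs => rw [← u.single_order_mul_powerSeriesPart, horder,
    eq_C_of_comp_X_mul_eq_self hd ha hg hv]
  simp

/-- If `u ∈ ℂ((z))` is a nonzero formal Laurent series and
`f(z) = z + a₂z² + ⋯` is a formal diffeomorphism tangent to the identity with
`f ≠ id`, and if `u ∘ f = μ·u` for some `μ ∈ ℂ*`, then `μ = 1` and `u` is a
nonzero constant. -/
theorem laurent_eigen_constant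
    (u : LaurentSeries ℂ) (hu : u ≠ 0)
    (f : PowerSeries ℂ) (hf0 : constantCoeff f = 0) (hf1 : coeff 1 f = 1)
    (hfne : f ≠ PowerSeries.X)
    (μ : ℂ) (hμ : μ ≠ 0) (h : u.comp f = μ • u) :
    μ = 1 ∧ ∃ c : ℂ, c ≠ 0 ∧ u = HahnSeries.single (0 : ℤ) c :=
  laurent_eigen_constant_general u hu f hf0 hf1 hfne μ h
end

section
/- Every nontrivial abelian subgroup of Diff̂(ℂ,0)₁ consists of elements all having the same order of tangency to the identity. That is, if G ≤ Diff̂(ℂ,0)₁ is abelian and f, g ∈ G are both different from the identity, with f(z) = z + a z^{k+1} + O(z^{k+2}) (a≠0) and g(z) = z + b z^{l+1} + O(z^{l+2}) (b≠0), then k = l. -/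
open PowerSeries

/-!
If `f = z + a z^(k+1) + ⋯` and `g = z + b z^(l+1) + ⋯`, then `g^j = z^j + j b z^(j+l) + ⋯`, so the
coefficient of `z^(k+l+1)` in `f ∘ g` is `g_(k+l+1) + (k+1) a b + f_(k+l+1)`. The two outer terms are
symmetric in `f` and `g`, hence `f ∘ g = g ∘ f` forces `(k+1) a b = (l+1) a b`, i.e. `k = l`.
-/

namespace PowerSeries

section CommRing

variable {R : Type*} [CommRing R]

theorem coeff_eq_of_X_pow_dvd_sub {φ ψ : R⟦X⟧} {N n : ℕ} (h : X ^ N ∣ φ - ψ) (hn : n < N) :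
    coeff n φ = coeff n ψ :=
  sub_eq_zero.mp (by simpa using X_pow_dvd_iff.mp h n hn)

theorem X_pow_dvd_sub_of_coeff {g : R⟦X⟧} {l : ℕ} (hl : 1 ≤ l) (h0 : constantCoeff g = 0)
    (h1 : coeff 1 g = 1) (hmid : ∀ j, 2 ≤ j → j ≤ l → coeff j g = 0) :
    X ^ (l + 2) ∣ g - (X + C (coeff (l + 1) g) * X ^ (l + 1)) := by
  refine X_pow_dvd_iff.mpr fun n hn => ?_
  rw [map_sub, sub_eq_zero, map_add, coeff_X, coeff_C_mul_X_pow]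
  obtain rfl | rfl | hn2 : n = 0 ∨ n = 1 ∨ 2 ≤ n := by omega
  · simp [h0]
  · simp [h1]; omega
  · obtain hnl | rfl : n ≤ l ∨ n = l + 1 := by omega
    · simp [hmid n hn2 hnl, show n ≠ 1 by omega, show n ≠ l + 1 by omega]
    · simp; omega

theorem X_pow_dvd_pow_sub {g : R⟦X⟧} {l : ℕ} (hl : 1 ≤ l) {b : R}
    (hg : X ^ (l + 2) ∣ g - (X + C b * X ^ (l + 1))) (m : ℕ) :
    X ^ (m + l + 1) ∣ g ^ m - (X ^ m + C (m * b) * X ^ (m + l)) := by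
  obtain ⟨l, rfl⟩ : ∃ l', l = l' + 1 := ⟨l - 1, by omega⟩
  obtain ⟨h, hh⟩ := hg
  induction m with
  | zero => simp
  | succ m ih =>
    obtain ⟨r, hr⟩ := ih
    refine ⟨h + C (m * b ^ 2) * X ^ l + C (m * b) * X ^ (l + 1) * h + r + C b * X ^ (l + 1) * r
      + X ^ (l + 2) * r * h, ?_⟩
    rw [sub_eq_iff_eq_add] at hh hr
    rw [pow_succ, hr, hh]
    simp only [map_mul, map_natCast, map_pow, Nat.cast_succ, map_add, map_one]
    ring

end CommRing

theorem coeff_comp_add_add_one {f g : ℂ⟦X⟧} {k l : ℕ} (hk : 1 ≤ k) (hl : 1 ≤ l) {a b : ℂ}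
    (hf : X ^ (k + 2) ∣ f - (X + C a * X ^ (k + 1)))
    (hg : X ^ (l + 2) ∣ g - (X + C b * X ^ (l + 1))) :
    coeff (k + l + 1) (f.comp g) = coeff (k + l + 1) g + (k + 1) * a * b + coeff (k + l + 1) f := by
  set N := k + l + 1 with hN
  have coeff_f (j : ℕ) (hj : j < k + 2) :
      coeff j f = (if j = 1 then 1 else 0) + if j = k + 1 then a else 0 := by
    rw [coeff_eq_of_X_pow_dvd_sub hf hj, map_add, coeff_X, coeff_C_mul_X_pow]
  have coeff_g_pow (j : ℕ) (hj : j ≤ N) (hjN : N < j + l + 1) :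
      coeff N (g ^ j) = (if N = j then 1 else 0) + if N = j + l then j * b else 0 := by
    rw [coeff_eq_of_X_pow_dvd_sub (X_pow_dvd_pow_sub hl hg j) hjN, map_add, coeff_X_pow,
      coeff_C_mul_X_pow]
  have hsupp : ({1, k + 1, N} : Finset ℕ) ⊆ Finset.range (N + 1) := by
    intro j hj
    simp only [Finset.mem_insert, Finset.mem_singleton] at hj
    rw [Finset.mem_range]
    omega
  rw [PowerSeries.comp, coeff_mk, ← Finset.sum_subset hsupp]
  · rw [Finset.sum_insert (by simp; omega), Finset.sum_insert (by simp; omega),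
      Finset.sum_singleton, coeff_f 1 (by omega), coeff_f (k + 1) (by omega),
      coeff_g_pow (k + 1) (by omega) (by omega), coeff_g_pow N le_rfl (by omega), pow_one]
    simp (disch := omega) only [if_pos, if_neg]
    push_cast
    ring
  · intro j hj hj'
    simp only [Finset.mem_insert, Finset.mem_singleton, not_or] at hj'
    rw [Finset.mem_range] at hj
    obtain hjk | hjk : j ≤ k ∨ k + 1 < j := by omega
    · rw [coeff_f j (by omega)]
      simp (disch := omega) only [if_neg, add_zero, zero_mul]
    · rw [coeff_g_pow j (by omega) (by omega)]
      simp (disch := omega) only [if_neg, add_zero, mul_zero]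

end PowerSeries

/-- In an abelian subgroup of `Diff̂(ℂ,0)₁`, all nontrivial elements have the
same order of tangency to the identity: if `f = z + a z^{k+1} + O(z^{k+2})` and
`g = z + b z^{l+1} + O(z^{l+2})` (`a, b ≠ 0`) are tangent to the identity and
commute, then `k = l`. -/
theorem same_tangency_order_of_commute
    (k l : ℕ) (hk : 1 ≤ k) (hl : 1 ≤ l)
    (a b : ℂ) (ha : a ≠ 0) (hb : b ≠ 0)
    (f g : PowerSeries ℂ)
    (hf0 : constantCoeff f = 0) (hf1 : coeff 1 f = 1)
    (hfmid : ∀ j : ℕ, 2 ≤ j → j ≤ k → coeff j f = 0)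
    (hfk : coeff (k + 1) f = a)
    (hg0 : constantCoeff g = 0) (hg1 : coeff 1 g = 1)
    (hgmid : ∀ j : ℕ, 2 ≤ j → j ≤ l → coeff j g = 0)
    (hgl : coeff (l + 1) g = b)
    (hcomm : PowerSeries.comp f g = PowerSeries.comp g f) :
    k = l := by
  have hf := hfk ▸ X_pow_dvd_sub_of_coeff hk hf0 hf1 hfmid
  have hg := hgl ▸ X_pow_dvd_sub_of_coeff hl hg0 hg1 hgmid
  have hfg := coeff_comp_add_add_one hk hl hf hg
  rw [hcomm, Nat.add_comm k l, coeff_comp_add_add_one hl hk hg hf] at hfg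
  have hkl : ((k : ℂ) + 1) * (a * b) = (l + 1) * (a * b) := by linear_combination -hfg
  exact_mod_cast add_right_cancel (mul_right_cancel₀ (mul_ne_zero ha hb) hkl)
end
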